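/- arXiv:2003.07631 — 4 statements merged into one kernel-verified Lean document; each statement's English description precedes it below -/
import Mathlib

section
/- For a bias-free deep rectifier network f and a point x, the gradient of f is constant on the open segment {t x : 0 < t < 1} wherever f is differentiable there; consequently, Integrated Gradients along the path t ↦ t x from ε x to x yields R_i = (1−ε) x_i [∇f(εx)]_i, and as ε → 0 this equals the simple Taylor attribution [∇f(εx)]_i (x_i − ε x_i). -/
inductive ReluNet : (n m : ℕ) → ((Fin n → ℝ) → (Fin m → ℝ)) → Prop where
  | single {n m : ℕ} (W : Matrix (Fin m) (Fin n) ℝ) :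
      ReluNet n m (fun x i => max 0 (W.mulVec x i))
  | comp {n p m : ℕ} {g : (Fin p → ℝ) → (Fin m → ℝ)} {f : (Fin n → ℝ) → (Fin p → ℝ)}
      (hg : ReluNet p m g) (hf : ReluNet n p f) : ReluNet n m (g ∘ f)

lemma relu_hom {n m : ℕ} {g : (Fin n → ℝ) → (Fin m → ℝ)} (h : ReluNet n m g) :
    ∀ c : ℝ, 0 ≤ c → ∀ x, g (c • x) = c • g x := by
  induction h with
  | single W =>
      intro c hc x
      funext i
      have h1 : W.mulVec (c • x) = c • W.mulVec x := W.mulVec_smul c x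
      simp only [h1, Pi.smul_apply, smul_eq_mul]
      rw [mul_max_of_nonneg _ _ hc, mul_zero]
  | comp hg hf ihg ihf =>
      intro c hc x
      simp only [Function.comp_apply, ihf c hc x, ihg c hc _]

lemma fderiv_hom_const {n : ℕ} {f : (Fin n → ℝ) → ℝ}
    (hom : ∀ c : ℝ, 0 ≤ c → ∀ y, f (c • y) = c * f y)
    {c : ℝ} (hc : 0 < c) {a : Fin n → ℝ}
    (ha : DifferentiableAt ℝ f a) (hca : DifferentiableAt ℝ f (c • a)) :
    fderiv ℝ f (c • a) = fderiv ℝ f a := by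
  set L : (Fin n → ℝ) →L[ℝ] (Fin n → ℝ) := c • ContinuousLinearMap.id ℝ (Fin n → ℝ) with hL
  have hLa : L a = c • a := by simp [hL]
  have hcomp : (fun y => f (c • y)) = f ∘ L := by
    funext y; simp [hL]
  have h1 : fderiv ℝ (fun y => f (c • y)) a = (fderiv ℝ f (c • a)).comp L := by
    rw [hcomp, fderiv_comp a (hLa ▸ hca) L.differentiableAt, L.fderiv, hLa]
  have h2 : fderiv ℝ (fun y => f (c • y)) a = c • fderiv ℝ f a := by
    have : (fun y => f (c • y)) = fun y => c * f y := by
      funext y; exact hom c hc.le y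
    rw [this, fderiv_const_mul ha]
  ext v
  have := congrArg (fun T => T v) (h1.symm.trans h2)
  simp only [ContinuousLinearMap.comp_apply, ContinuousLinearMap.smul_apply, hL,
    ContinuousLinearMap.id_apply, smul_eq_mul] at this
  have h3 : fderiv ℝ f (c • a) (c • v) = c * fderiv ℝ f a v := this
  rw [map_smul, smul_eq_mul] at h3
  exact mul_left_cancel₀ hc.ne' h3

/-- For a bias-free ReLU network `f`, differentiable at every point of the segment
`{t • x : ε ≤ t ≤ 1}`, the gradient is constant on that segment; consequently
Integrated Gradients along `t ↦ t • x` from `ε • x` to `x` yields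
`R_i = (1 - ε) x_i [∇f(εx)]_i`, which equals the Taylor attribution
`[∇f(εx)]_i (x_i - ε x_i)`. -/
theorem stmt_9 {n : ℕ} {g : (Fin n → ℝ) → (Fin 1 → ℝ)} (hg : ReluNet n 1 g)
    (f : (Fin n → ℝ) → ℝ) (hfg : f = fun y => g y 0)
    (x : Fin n → ℝ) (ε : ℝ) (hε : 0 < ε) (hε1 : ε ≤ 1)
    (hd : ∀ t ∈ Set.Icc ε 1, DifferentiableAt ℝ f (t • x)) :
    (∀ s ∈ Set.Icc ε 1, ∀ t ∈ Set.Icc ε 1, fderiv ℝ f (s • x) = fderiv ℝ f (t • x)) ∧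
      ∀ i, (∫ t in ε..1, x i * fderiv ℝ f (t • x) (Pi.single i 1))
            = (1 - ε) * (x i * fderiv ℝ f (ε • x) (Pi.single i 1)) ∧
          (1 - ε) * (x i * fderiv ℝ f (ε • x) (Pi.single i 1))
            = fderiv ℝ f (ε • x) (Pi.single i 1) * (x i - ε * x i) := by
  have hom : ∀ c : ℝ, 0 ≤ c → ∀ y, f (c • y) = c * f y := by
    intro c hc y
    have := relu_hom hg c hc y
    simp [hfg, this]
  have hconst : ∀ s ∈ Set.Icc ε 1, ∀ t ∈ Set.Icc ε 1,
      fderiv ℝ f (s • x) = fderiv ℝ f (t • x) := by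
    intro s hs t ht
    have hspos : 0 < s := lt_of_lt_of_le hε hs.1
    have htpos : 0 < t := lt_of_lt_of_le hε ht.1
    have hc : (0:ℝ) < s / t := div_pos hspos htpos
    have key : (s / t) • (t • x) = s • x := by
      rw [smul_smul, div_mul_cancel₀ _ htpos.ne']
    have := fderiv_hom_const hom hc (hd t ht) (by rw [key]; exact hd s hs)
    rwa [key] at this
  refine ⟨hconst, fun i => ?_⟩
  constructor
  · have heps : ε ∈ Set.Icc ε 1 := ⟨le_refl _, hε1⟩
    have : (∫ t in ε..1, x i * fderiv ℝ f (t • x) (Pi.single i 1))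
        = ∫ t in ε..1, x i * fderiv ℝ f (ε • x) (Pi.single i 1) := by
      apply intervalIntegral.integral_congr
      intro t ht
      rw [Set.uIcc_of_le hε1] at ht
      simp [hconst t ht ε heps]
    rw [this, intervalIntegral.integral_const, smul_eq_mul]
  · ring
end

section
/- In deep Taylor decomposition of a bias-free ReLU neuron with relevance model R̂_k(a) = max(0, ∑_j a_j w_{jk}) · c_k (c_k > 0 constant), choosing the root point on the line ã = a − t·a⊙(1 + γ·1_{w_k ≥ 0}) and enforcing conservation ∑_j R_{j←k} = R_k yields exactly the LRP-γ messages R_{j←k} = a_j (w_{jk} + γ w_{jk}^+) R_k / ∑_{j'} a_{j'} (w_{j'k} + γ w_{j'k}^+). -/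
/-- Deep Taylor decomposition of a bias-free ReLU neuron with relevance model
`R̂_k(a) = max(0, ∑_j a_j w_j) c`, with root point on the line
`ã_j(t) = a_j - t a_j (1 + γ 1[w_j ≥ 0])` chosen to enforce conservation,
yields exactly the LRP-γ messages. -/
theorem stmt_13 {J : Type*} [Fintype J]
    (a w : J → ℝ) (γ c : ℝ) (hγ : 0 ≤ γ) (hc : 0 < c)
    (hz : 0 < ∑ j, a j * w j)
    (hD : 0 < ∑ j, a j * (w j + γ * max 0 (w j))) :
    ∃ t : ℝ,
      ((∑ j, w j * c * (a j - (a j - t * a j * (1 + γ * (if 0 ≤ w j then (1:ℝ) else 0)))))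
          = max 0 (∑ j, a j * w j) * c) ∧
      ∀ j, w j * c * (a j - (a j - t * a j * (1 + γ * (if 0 ≤ w j then (1:ℝ) else 0))))
          = a j * (w j + γ * max 0 (w j)) * (max 0 (∑ j', a j' * w j') * c) /
              (∑ j', a j' * (w j' + γ * max 0 (w j'))) := by
  set S := ∑ j, a j * w j with hS
  set D := ∑ j, a j * (w j + γ * max 0 (w j)) with hDdef
  have hmaxS : max 0 S = S := max_eq_right hz.le
  have hDne : D ≠ 0 := hD.ne'
  refine ⟨S / D, ?_, ?_⟩
  · have key : ∀ j, w j * c * (a j - (a j - S / D * a j * (1 + γ * (if 0 ≤ w j then (1:ℝ) else 0))))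
        = (a j * (w j + γ * max 0 (w j))) * (S / D * c) := by
      intro j
      by_cases h : 0 ≤ w j
      · simp only [if_pos h, max_eq_right h]; ring
      · simp only [if_neg h, max_eq_left (le_of_lt (not_le.mp h))]; ring
    rw [Finset.sum_congr rfl (fun j _ => key j), ← Finset.sum_mul, hmaxS, ← hDdef]
    field_simp
  · intro j
    rw [hmaxS]
    by_cases h : 0 ≤ w j
    · simp only [if_pos h, max_eq_right h]; field_simp; ring
    · simp only [if_neg h, max_eq_left (le_of_lt (not_le.mp h))]; field_simp; ring
end

section
/- For the kernel k-means cluster assignment model with Gaussian kernel K(x,x') = exp(−γ‖x−x'‖²), the log probability ratio log[P(ω_c|x)/(1−P(ω_c|x))] can be rewritten as β·softmin_{k≠c}{ softmin^γ_{j∈C_k} { softmax^γ_{i∈C_c} { w_{ij}·x + b_{ijk} } } } with w_{ij} = 2(x_i − x_j) and b_{ijk} = ‖x_j‖² − ‖x_i‖² + γ^{-1}(log Z_k − log Z_c). -/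
/-!
The Gaussian kernel ratio `K(x,xᵢ)/K(x,xⱼ)` is `exp(γ(wᵢⱼ·x + ‖xⱼ‖² - ‖xᵢ‖²))`, so every
soft-max/soft-min level undoes one exponential. Writing `Pₖ = Zₖ⁻¹ ∑_{j∈Cₖ} K(x,xⱼ)`, the inner
soft-max over `i ∈ C_c` gives `exp(-γ·softmax) = K(x,xⱼ) Z_c / (Z_k ∑_{i∈C_c} K(x,xᵢ))`, the
soft-min over `j ∈ Cₖ` then gives `exp(-γ·softmin) = Pₖ / P_c`, and the outer `β`-soft-min is
`-log ∑_{k≠c} (Pₖ / P_c)^{β/γ}`.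
-/

open Real Finset

namespace KernelKMeans

noncomputable section

variable {α ι : Type*}

def softmax (γ : ℝ) (s : Finset α) (z : α → ℝ) : ℝ :=
  γ⁻¹ * log (∑ i ∈ s, exp (γ * z i))

def softmin (γ : ℝ) (s : Finset α) (z : α → ℝ) : ℝ :=
  -γ⁻¹ * log (∑ i ∈ s, exp (-γ * z i))

def gaussianKernel [Fintype ι] (γ : ℝ) (x y : ι → ℝ) : ℝ :=
  exp (-γ * ∑ l, (x l - y l) ^ 2)

end

section SoftExtrema

variable {γ : ℝ} {s : Finset α} {z : α → ℝ}

theorem mul_softmin (hγ : γ ≠ 0) :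
    γ * softmin γ s z = -log (∑ i ∈ s, exp (-γ * z i)) := by
  rw [softmin, ← mul_assoc, mul_neg, mul_inv_cancel₀ hγ, neg_one_mul]

theorem exp_neg_mul_softmin (hγ : γ ≠ 0) (hs : s.Nonempty) :
    exp (-γ * softmin γ s z) = ∑ i ∈ s, exp (-γ * z i) := by
  rw [neg_mul, mul_softmin hγ, neg_neg, exp_log (sum_pos (fun _ _ => exp_pos _) hs)]

theorem exp_neg_mul_softmax (hγ : γ ≠ 0) (hs : s.Nonempty) :
    exp (-γ * softmax γ s z) = (∑ i ∈ s, exp (γ * z i))⁻¹ := by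
  rw [softmax, neg_mul, ← mul_assoc, mul_inv_cancel₀ hγ, one_mul, exp_neg,
    exp_log (sum_pos (fun _ _ => exp_pos _) hs)]

end SoftExtrema

theorem exp_neg_mul_eq_rpow {γ : ℝ} (hγ : γ ≠ 0) (β t : ℝ) :
    exp (-β * t) = exp (-γ * t) ^ (β / γ) := by
  rw [← exp_mul]
  congr 1
  field_simp

theorem gaussianKernel_div [Fintype ι] (γ : ℝ) (x p q : ι → ℝ) :
    gaussianKernel γ x p / gaussianKernel γ x q =
      exp (γ * ((∑ l, 2 * (p l - q l) * x l) + ((∑ l, q l ^ 2) - ∑ l, p l ^ 2))) := by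
  rw [gaussianKernel, gaussianKernel, ← exp_sub, ← sum_sub_distrib, ← sum_add_distrib,
    mul_sum, mul_sum, mul_sum, ← sum_sub_distrib]
  exact congrArg exp (sum_congr rfl fun l _ => by ring)

theorem exp_neg_mul_softmin_softmax [Fintype ι] {γ : ℝ} (hγ : γ ≠ 0) (pts : α → ι → ℝ)
    (x : ι → ℝ) {s t : Finset α} (hs : s.Nonempty) (ht : t.Nonempty) {a b : ℝ}
    (ha : 0 < a) (hb : 0 < b) :
    exp (-γ * softmin γ s fun j => softmax γ t fun i =>
        (∑ l, 2 * (pts i l - pts j l) * x l) + ((∑ l, pts j l ^ 2) - ∑ l, pts i l ^ 2)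
          + γ⁻¹ * (log a - log b)) =
      (a⁻¹ * ∑ j ∈ s, gaussianKernel γ x (pts j)) /
        (b⁻¹ * ∑ i ∈ t, gaussianKernel γ x (pts i)) := by
  have sum_exp_eq : ∀ j, ∑ i ∈ t, exp (γ * ((∑ l, 2 * (pts i l - pts j l) * x l)
        + ((∑ l, pts j l ^ 2) - ∑ l, pts i l ^ 2) + γ⁻¹ * (log a - log b))) =
      (∑ i ∈ t, gaussianKernel γ x (pts i)) * (a / b) / gaussianKernel γ x (pts j) := by
    intro j
    rw [sum_mul, sum_div]
    refine sum_congr rfl fun i _ => ?_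
    rw [mul_add, mul_inv_cancel_left₀ hγ, exp_add, exp_sub, exp_log ha, exp_log hb,
      ← gaussianKernel_div, div_mul_eq_mul_div]
  rw [exp_neg_mul_softmin hγ hs]
  simp_rw [exp_neg_mul_softmax hγ ht, sum_exp_eq, inv_div]
  rw [← sum_div]
  have ht_pos : 0 < ∑ i ∈ t, gaussianKernel γ x (pts i) :=
    sum_pos (fun _ _ => exp_pos _) ht
  field_simp

end KernelKMeans

open KernelKMeans in
theorem stmt_15_general {K d : ℕ} {ι : Type*}
    (pts : ι → Fin d → ℝ) (C : Fin K → Finset ι) (hC : ∀ k, (C k).Nonempty)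
    (Z : Fin K → ℝ) (hZ : ∀ k, 0 < Z k)
    (γ β : ℝ) (hγ : 0 < γ) (hβ : 0 < β)
    (c : Fin K) (x : Fin d → ℝ) :
    Real.log ((((Z c)⁻¹ * ∑ i ∈ C c, Real.exp (-γ * ∑ l, (x l - pts i l) ^ 2)) ^ (β / γ)) /
        ∑ k ∈ Finset.univ.erase c,
          ((Z k)⁻¹ * ∑ j ∈ C k, Real.exp (-γ * ∑ l, (x l - pts j l) ^ 2)) ^ (β / γ))
      = β * (-β⁻¹ * Real.log (∑ k ∈ Finset.univ.erase c, Real.exp (-β *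
          (-γ⁻¹ * Real.log (∑ j ∈ C k, Real.exp (-γ *
            (γ⁻¹ * Real.log (∑ i ∈ C c, Real.exp (γ *
              ((∑ l, 2 * (pts i l - pts j l) * x l)
                + ((∑ l, (pts j l) ^ 2) - (∑ l, (pts i l) ^ 2))
                + γ⁻¹ * (Real.log (Z k) - Real.log (Z c)))))))))))) := by
  have hP : ∀ k, 0 ≤ (Z k)⁻¹ * ∑ j ∈ C k, gaussianKernel γ x (pts j) := fun k =>
    mul_nonneg (inv_nonneg.2 (hZ k).le) (sum_nonneg fun _ _ => (exp_pos _).le)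
  change _ = β * softmin β (univ.erase c) fun k => softmin γ (C k) fun j =>
    softmax γ (C c) fun i => _
  conv_rhs =>
    rw [mul_softmin hβ.ne', sum_congr rfl fun k _ => by
      rw [exp_neg_mul_eq_rpow hγ.ne', exp_neg_mul_softmin_softmax hγ.ne' pts x (hC k) (hC c)
        (hZ k) (hZ c), div_rpow (hP k) (hP c)], ← sum_div, ← log_inv, inv_div]
  rfl

/-- Neuralization of kernel k-means with Gaussian kernel: the log probability ratio
in favor of cluster `c` equals `β · softmin_{k≠c} softmin^γ_{j∈C_k} softmax^γ_{i∈C_c}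
{ w_{ij}·x + b_{ijk} }` with `w_{ij} = 2(x_i - x_j)` and
`b_{ijk} = ‖x_j‖² - ‖x_i‖² + γ⁻¹ (log Z_k - log Z_c)`. -/
theorem stmt_15 {K d : ℕ} {ι : Type*} (hK : 2 ≤ K)
    (pts : ι → Fin d → ℝ) (C : Fin K → Finset ι) (hC : ∀ k, (C k).Nonempty)
    (Z : Fin K → ℝ) (hZ : ∀ k, 0 < Z k)
    (γ β : ℝ) (hγ : 0 < γ) (hβ : 0 < β)
    (c : Fin K) (x : Fin d → ℝ) :
    Real.log ((((Z c)⁻¹ * ∑ i ∈ C c, Real.exp (-γ * ∑ l, (x l - pts i l) ^ 2)) ^ (β / γ)) /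
        ∑ k ∈ Finset.univ.erase c,
          ((Z k)⁻¹ * ∑ j ∈ C k, Real.exp (-γ * ∑ l, (x l - pts j l) ^ 2)) ^ (β / γ))
      = β * (-β⁻¹ * Real.log (∑ k ∈ Finset.univ.erase c, Real.exp (-β *
          (-γ⁻¹ * Real.log (∑ j ∈ C k, Real.exp (-γ *
            (γ⁻¹ * Real.log (∑ i ∈ C c, Real.exp (γ *
              ((∑ l, 2 * (pts i l - pts j l) * x l)
                + ((∑ l, (pts j l) ^ 2) - (∑ l, (pts i l) ^ 2))
                + γ⁻¹ * (Real.log (Z k) - Real.log (Z c)))))))))))) :=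
  stmt_15_general pts C hC Z hZ γ β hγ hβ c x
end

section
/- The number of affine linear regions of a function R → R computed by a deep ReLU network can grow exponentially with depth: for every L there exists a bias-equipped ReLU network of depth L and constant width (e.g., width 2) computing a piecewise linear function with at least 2^L linear pieces (the L-fold composition of the tent map). -/
lemma tent_iter : ∀ (L j : ℕ), j < 2^L → ∀ x : ℝ, (j:ℝ)/2^L ≤ x → x ≤ (j+1)/2^L →
    (fun x : ℝ => 2 * max 0 x - 4 * max 0 (x - 1 / 2))^[L] x =
      if Even j then 2^L * x - j else (j+1) - 2^L * x := by
  intro L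
  induction L with
  | zero =>
    intro j hj x h1 h2
    interval_cases j
    simp
  | succ L ih =>
    intro j hj x h1 h2
    rw [Function.iterate_succ_apply]
    have h2L : (0:ℝ) < 2^L := by positivity
    have h2L1 : (0:ℝ) < 2^(L+1) := by positivity
    have hpow : (2:ℝ)^(L+1) = 2 * 2^L := by ring
    by_cases hjL : j < 2^L
    · have hx0 : 0 ≤ x := le_trans (by positivity) h1
      have hj1 : (j:ℝ) + 1 ≤ 2^L := by exact_mod_cast hjL
      have hxh : x ≤ 1/2 := by
        rw [le_div_iff₀ h2L1] at h2
        nlinarith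
      have hT : (2 * max 0 x - 4 * max 0 (x - 1 / 2)) = 2 * x := by
        rw [max_eq_right hx0, max_eq_left (by linarith)]; ring
      show (fun x : ℝ => 2 * max 0 x - 4 * max 0 (x - 1 / 2))^[L] (2 * max 0 x - 4 * max 0 (x - 1/2)) = _
      rw [hT]
      rw [ih j hjL (2*x) (by rw [div_le_iff₀ h2L]; rw [div_le_iff₀ h2L1] at h1; nlinarith)
        (by rw [le_div_iff₀ h2L]; rw [le_div_iff₀ h2L1] at h2; nlinarith)]
      by_cases hje : Even j <;> simp [hje] <;> ring
    · have hjge : (2:ℝ)^L ≤ j := by exact_mod_cast Nat.le_of_not_lt hjL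
      have hxh : 1/2 ≤ x := by
        rw [div_le_iff₀ h2L1] at h1
        nlinarith
      have hT : (2 * max 0 x - 4 * max 0 (x - 1 / 2)) = 2 - 2*x := by
        rw [max_eq_right (by linarith), max_eq_right (by linarith)]; ring
      show (fun x : ℝ => 2 * max 0 x - 4 * max 0 (x - 1 / 2))^[L] (2 * max 0 x - 4 * max 0 (x - 1/2)) = _
      rw [hT]
      set j' : ℕ := 2^(L+1) - 1 - j with hj'
      have hj'lt : j' < 2^L := by
        have := Nat.pow_succ 2 L
        omega
      have hsum : j' + j + 1 = 2^(L+1) := by omega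
      have hj'r : (j':ℝ) = 2^(L+1) - 1 - j := by
        have hc : (j':ℝ) + j + 1 = 2^(L+1) := by exact_mod_cast hsum
        linarith
      have hb1 : ((j':ℝ))/2^L ≤ 2 - 2*x := by
        rw [div_le_iff₀ h2L, hj'r]
        rw [le_div_iff₀ h2L1] at h2
        nlinarith
      have hb2 : 2 - 2*x ≤ ((j':ℝ)+1)/2^L := by
        rw [le_div_iff₀ h2L, hj'r]
        rw [div_le_iff₀ h2L1] at h1
        nlinarith
      rw [ih j' hj'lt (2 - 2*x) hb1 hb2]
      have hmod : 2^(L+1) = 2 * 2^L := by ring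
      have hpar : Even j' ↔ ¬ Even j := by
        rw [Nat.even_iff, Nat.even_iff]
        omega
      by_cases hje : Even j
      · have h' : ¬ Even j' := by rw [hpar]; simp [hje]
        simp only [hje, h', if_true, if_false]
        rw [hj'r]; push_cast; ring
      · have h' : Even j' := hpar.2 hje
        simp only [hje, h', if_true, if_false]
        rw [hj'r]; push_cast; ring

set_option maxHeartbeats 1000000 in
lemma tent_mem (L m : ℕ) (t : Fin (m + 1) → ℝ) (hmono : Monotone t)
    (h0 : t 0 = 0) (h1 : t (Fin.last m) = 1)
    (haff : ∀ k : Fin m, ∃ a b : ℝ,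
      ∀ x ∈ Set.Icc (t k.castSucc) (t k.succ),
        (fun x : ℝ => 2 * max 0 x - 4 * max 0 (x - 1 / 2))^[L] x = a * x + b)
    (j : ℕ) (hj : j ≤ 2^L) : ∃ k : Fin (m+1), t k = (j:ℝ)/2^L := by
  classical
  have h2L : (0:ℝ) < 2^L := by positivity
  set x : ℝ := (j:ℝ)/2^L with hxdef
  have hx0 : 0 ≤ x := by positivity
  rcases Nat.eq_zero_or_pos j with hj0 | hj0
  · exact ⟨0, by simp [h0, hxdef, hj0]⟩
  rcases eq_or_lt_of_le hj with hjtop | hjtop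
  · refine ⟨Fin.last m, ?_⟩
    have hc : (j:ℝ) = 2^L := by exact_mod_cast hjtop
    rw [h1, hxdef, hc, div_self (ne_of_gt h2L)]
  have hx1 : x < 1 := by
    rw [hxdef, div_lt_one h2L]
    exact_mod_cast hjtop
  let K : Finset (Fin (m+1)) := Finset.univ.filter (fun k => t k ≤ x)
  have hne : K.Nonempty := ⟨0, by simp [K, h0, hx0]⟩
  set ks := K.max' hne with hks
  have hksle : t ks ≤ x := by
    have := K.max'_mem hne
    simpa [K] using this
  by_cases heq : t ks = x
  · exact ⟨ks, heq⟩
  have hkslt : t ks < x := lt_of_le_of_ne hksle heq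
  have hksm : ks.val < m := by
    by_contra h
    have : ks = Fin.last m := by
      apply Fin.ext
      simp [Fin.last]
      omega
    rw [this, h1] at hkslt
    linarith
  set k' : Fin m := ⟨ks.val, hksm⟩ with hk'
  have hcast : k'.castSucc = ks := by
    apply Fin.ext
    simp [hk']
  have hsucc : x < t k'.succ := by
    by_contra h
    push_neg at h
    have hmem : k'.succ ∈ K := by simp [K, h]
    have := K.le_max' _ hmem
    rw [← hks] at this
    have : (k'.succ : ℕ) ≤ (ks : ℕ) := this
    simp [hk', Fin.val_succ] at this
  obtain ⟨a, b, hab⟩ := haff k'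
  set δ : ℝ := min (min (x - t k'.castSucc) (t k'.succ - x)) (1/2^L) with hδdef
  have hδ : 0 < δ := by
    apply lt_min (lt_min _ _) <;> first | linarith [hcast ▸ hkslt] | positivity
  have hδ1 : δ ≤ x - t k'.castSucc := le_trans (min_le_left _ _) (min_le_left _ _)
  have hδ2 : δ ≤ t k'.succ - x := le_trans (min_le_left _ _) (min_le_right _ _)
  have hδ3 : δ * 2^L ≤ 1 := by
    rw [← le_div_iff₀ h2L]
    exact min_le_right _ _
  have hjr : (1:ℝ) ≤ j := by exact_mod_cast hj0
  have hjr2 : (j:ℝ) ≤ 2^L := by exact_mod_cast hj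
  have hxval : 2^L * x = j := by
    rw [hxdef]; field_simp
  -- values at x - δ, x, x + δ
  have hg1 := tent_iter L (j-1) (by omega) (x - δ)
    (by
      have : ((j-1:ℕ):ℝ) = (j:ℝ) - 1 := by
        have : (1:ℕ) ≤ j := hj0
        push_cast [Nat.cast_sub this]
        ring
      rw [this, div_le_iff₀ h2L]
      nlinarith)
    (by
      have : ((j-1:ℕ):ℝ) + 1 = (j:ℝ) := by
        have : (1:ℕ) ≤ j := hj0
        push_cast [Nat.cast_sub this]
        ring
      rw [this, le_div_iff₀ h2L]
      nlinarith)
  have hg2 := tent_iter L j (by omega) (x + δ)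
    (by rw [div_le_iff₀ h2L]; nlinarith)
    (by rw [le_div_iff₀ h2L]; nlinarith)
  have hg3 := tent_iter L j (by omega) x
    (by rw [div_le_iff₀ h2L]; nlinarith)
    (by rw [le_div_iff₀ h2L]; nlinarith)
  have hIcc1 : x - δ ∈ Set.Icc (t k'.castSucc) (t k'.succ) :=
    ⟨by linarith, by linarith⟩
  have hIcc2 : x + δ ∈ Set.Icc (t k'.castSucc) (t k'.succ) :=
    ⟨by linarith, by linarith⟩
  have hIcc3 : x ∈ Set.Icc (t k'.castSucc) (t k'.succ) :=
    ⟨by linarith, by linarith⟩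
  have e1 := hab _ hIcc1
  have e2 := hab _ hIcc2
  have e3 := hab _ hIcc3
  rw [hg1] at e1
  rw [hg2] at e2
  rw [hg3] at e3
  have hcomb : (a * (x - δ) + b) + (a * (x + δ) + b) = 2 * (a * x + b) := by ring
  have hjcast : ((j-1:ℕ):ℝ) = (j:ℝ) - 1 := by
    have : (1:ℕ) ≤ j := hj0
    push_cast [Nat.cast_sub this]
    ring
  have hδpos : 0 < 2^L * δ := by positivity
  exfalso
  by_cases hje : Even j
  · have hjo : ¬ Even (j - 1) := by
      rw [Nat.even_iff] at *
      omega
    rw [if_pos hje] at e2 e3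
    rw [if_neg hjo, hjcast] at e1
    nlinarith [hcomb]
  · have hjo : Even (j - 1) := by
      rw [Nat.even_iff] at *
      omega
    rw [if_neg hje] at e2 e3
    rw [if_pos hjo, hjcast] at e1
    nlinarith [hcomb]

/-- The number of affine linear pieces of a deep ReLU network `ℝ → ℝ` can grow
exponentially with depth: the `L`-fold composition of the tent map
`T(x) = 2 max(0,x) - 4 max(0, x - 1/2)` (one bias-equipped ReLU layer of width 2
per iteration, hence a depth-`L` network) is a function such that every partition
`0 = t_0 ≤ … ≤ t_m = 1` of `[0,1]` into intervals on which it is affine has at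
least `2^L` pieces. -/
theorem stmt_19 (L : ℕ) :
    ∃ g : ℝ → ℝ,
      g = (fun x : ℝ => 2 * max 0 x - 4 * max 0 (x - 1 / 2))^[L] ∧
      ∀ (m : ℕ) (t : Fin (m + 1) → ℝ), Monotone t → t 0 = 0 → t (Fin.last m) = 1 →
        (∀ k : Fin m, ∃ a b : ℝ,
          ∀ x ∈ Set.Icc (t k.castSucc) (t k.succ), g x = a * x + b) →
        2 ^ L ≤ m := by
  refine ⟨_, rfl, ?_⟩
  intro m t hmono h0 h1 haff
  have h2L : (0:ℝ) < 2^L := by positivity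
  have hmem : ∀ j : Fin (2^L + 1), ∃ k : Fin (m+1), t k = ((j:ℕ):ℝ)/2^L := by
    intro j
    exact tent_mem L m t hmono h0 h1 haff j (by omega)
  choose f hf using hmem
  have hinj : Function.Injective f := by
    intro j1 j2 h
    have : ((j1:ℕ):ℝ)/2^L = ((j2:ℕ):ℝ)/2^L := by
      rw [← hf j1, ← hf j2, h]
    have : ((j1:ℕ):ℝ) = ((j2:ℕ):ℝ) := by
      field_simp at this
      exact_mod_cast this
    have : (j1:ℕ) = (j2:ℕ) := by exact_mod_cast this
    exact Fin.ext this
  have := Fintype.card_le_of_injective f hinj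
  simp at this
  omega
end
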